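/- arXiv:1211.0396 — 4 statements merged into one kernel-verified Lean document; each statement's English description precedes it below -/
import Mathlib

section
/- Two matrices A, B ∈ M_n(ℂ) satisfy AB* = A*B = 0 if and only if there exist unitary matrices U, V ∈ M_n(ℂ) such that UAV = diag(a_1,...,a_n) and UBV = diag(b_1,...,b_n) with all a_i, b_i ≥ 0 and a_i·b_i = 0 for every i. -/
open Matrix Kronecker

noncomputable def svals {ι : Type*} [Fintype ι] [DecidableEq ι]
    (A : Matrix ι ι ℂ) : ι → ℝ :=
  fun i => Real.sqrt ((Matrix.isHermitian_conjTranspose_mul_self A).eigenvalues i)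

noncomputable def kyFan {ι : Type*} [Fintype ι] [DecidableEq ι]
    (k : ℕ) (A : Matrix ι ι ℂ) : ℝ :=
  sSup {x : ℝ | ∃ s : Finset ι, s.card = k ∧ x = ∑ i ∈ s, svals A i}

noncomputable def schattenNorm {ι : Type*} [Fintype ι] [DecidableEq ι]
    (p : ℝ) (A : Matrix ι ι ℂ) : ℝ :=
  (∑ i, svals A i ^ p) ^ (1 / p)

noncomputable def specNorm {ι : Type*} [Fintype ι] [DecidableEq ι]
    (A : Matrix ι ι ℂ) : ℝ :=
  sSup (Set.range (svals A))

/-!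
Put `P = AᴴA` and `Q = BᴴB`; `ABᴴ = 0` gives `PQ = QP = 0`. On an eigenvector `v` of the
Hermitian matrix `P - Q` with eigenvalue `μ ≥ 0` one gets `Q²v = -μ Qv`, and positivity of `Q`
forces `Qv = 0`, i.e. `Bv = 0`; symmetrically `Av = 0` when `μ ≤ 0`. So an orthonormal
eigenbasis `(vⱼ)` of `P - Q` has `Avⱼ = 0` or `Bvⱼ = 0` for each `j`, and it diagonalizes
`(A + B)ᴴ(A + B)`, which equals `P + Q` because `AᴴB = 0`. Hence the vectors `(A + B)vⱼ` are
pairwise orthogonal; normalizing them and completing to an orthonormal basis `(uⱼ)` gives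
`Avⱼ = ‖Avⱼ‖ uⱼ` and `Bvⱼ = ‖Bvⱼ‖ uⱼ`. The converse holds because both relations are
invariant under `A ↦ UAV`, `B ↦ UBV`.
-/

section
variable {𝕜 E ι : Type*} [RCLike 𝕜] [NormedAddCommGroup E] [InnerProductSpace 𝕜 E]
  [FiniteDimensional 𝕜 E] [Fintype ι]

theorem exists_orthonormalBasis_eq_norm_smul_of_pairwise_inner_eq_zero
    (hcard : Module.finrank 𝕜 E = Fintype.card ι) {f : ι → E}
    (hf : Pairwise fun i j => inner 𝕜 (f i) (f j) = 0) :
    ∃ u : OrthonormalBasis ι 𝕜 E, ∀ i, f i = (‖f i‖ : 𝕜) • u i := by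
  let e := Fintype.equivFin ι
  refine ⟨(InnerProductSpace.gramSchmidtOrthonormalBasis
    (hcard.trans (Fintype.card_fin _).symm) (f ∘ e.symm)).reindex e.symm, fun i => ?_⟩
  by_cases hi : f i = 0
  · simp [hi]
  rw [OrthonormalBasis.reindex_apply, Equiv.symm_symm,
    InnerProductSpace.gramSchmidtOrthonormalBasis_apply_of_orthogonal (f := f ∘ e.symm) _
      (hf.comp_of_injective e.symm.injective) (by simpa using hi)]
  simp only [Function.comp_apply, Equiv.symm_apply_apply]
  exact (smul_inv_smul₀ (by simpa using hi) _).symm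

end

namespace Matrix

variable {𝕜 : Type*} [RCLike 𝕜] {ι m n p : Type*} [Fintype m] [Fintype n] [Fintype p]

section

open ComplexOrder

theorem PosSemidef.mulVec_eq_zero_of_sub_mulVec_eq_smul {P Q : Matrix n n 𝕜} (hQ : Q.PosSemidef)
    (hQP : Q * P = 0) {v : n → 𝕜} {μ : ℝ} (hμ : 0 ≤ μ) (hv : (P - Q) *ᵥ v = μ • v) :
    Q *ᵥ v = 0 := by
  have hQQ : Q *ᵥ (Q *ᵥ v) = -(μ : 𝕜) • (Q *ᵥ v) := by
    have := congrArg (Q *ᵥ ·) hv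
    simp only [mulVec_mulVec, Matrix.mul_sub, hQP, zero_sub, neg_mulVec, mulVec_smul] at this
    rw [mulVec_mulVec, neg_smul, ← RCLike.real_smul_eq_coe_smul, ← this, neg_neg]
  have hnorm : star (Q *ᵥ v) ⬝ᵥ (Q *ᵥ v) = -(μ : 𝕜) * (star v ⬝ᵥ (Q *ᵥ v)) := by
    rw [star_mulVec, ← dotProduct_mulVec, hQ.1.eq, hQQ, dotProduct_smul, smul_eq_mul]
  have hle : star (Q *ᵥ v) ⬝ᵥ (Q *ᵥ v) ≤ 0 := by
    rw [hnorm, neg_mul]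
    exact neg_nonpos.2 (mul_nonneg (by exact_mod_cast hμ) (hQ.dotProduct_mulVec_nonneg v))
  exact dotProduct_star_self_eq_zero.1 (le_antisymm hle (dotProduct_star_self_nonneg _))

theorem mulVec_eq_zero_or_mulVec_eq_zero_of_mul_conjTranspose_eq_zero {A : Matrix m n 𝕜}
    {B : Matrix p n 𝕜} (hAB : A * Bᴴ = 0) {v : n → 𝕜} {μ : ℝ}
    (hv : (Aᴴ * A - Bᴴ * B) *ᵥ v = μ • v) : A *ᵥ v = 0 ∨ B *ᵥ v = 0 := by
  have hPQ : Aᴴ * A * (Bᴴ * B) = 0 := by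
    rw [Matrix.mul_assoc, ← Matrix.mul_assoc A, hAB, Matrix.zero_mul, Matrix.mul_zero]
  have hQP : Bᴴ * B * (Aᴴ * A) = 0 := by
    simpa [Matrix.mul_assoc] using congrArg conjTranspose hPQ
  rw [← conjTranspose_mul_self_mulVec_eq_zero A, ← conjTranspose_mul_self_mulVec_eq_zero B]
  rcases le_total 0 μ with hμ | hμ
  · exact .inr <| (posSemidef_conjTranspose_mul_self B).mulVec_eq_zero_of_sub_mulVec_eq_smul
      hQP hμ hv
  · refine .inl <| (posSemidef_conjTranspose_mul_self A).mulVec_eq_zero_of_sub_mulVec_eq_smul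
      hPQ (neg_nonneg.2 hμ) ?_
    rw [← neg_sub, neg_mulVec, hv, neg_smul]

end

theorem exists_conjTranspose_add_mul_add_mulVec_eq_smul {A B : Matrix m n 𝕜} (hAB : Aᴴ * B = 0)
    {v : n → 𝕜} {μ : ℝ} (hv : (Aᴴ * A - Bᴴ * B) *ᵥ v = μ • v) (hv0 : A *ᵥ v = 0 ∨ B *ᵥ v = 0) :
    ∃ c : 𝕜, ((A + B)ᴴ * (A + B)) *ᵥ v = c • v := by
  have hsum : (A + B)ᴴ * (A + B) = Aᴴ * A + Bᴴ * B := by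
    have hBA : Bᴴ * A = 0 := by simpa using congrArg conjTranspose hAB
    simp [Matrix.add_mul, Matrix.mul_add, hAB, hBA]
  rw [RCLike.real_smul_eq_coe_smul (K := 𝕜)] at hv
  rw [hsum]
  rcases hv0 with h | h
  · refine ⟨-μ, ?_⟩
    rw [neg_smul, ← hv]
    simp [sub_mulVec, add_mulVec, ← mulVec_mulVec, h]
  · refine ⟨μ, ?_⟩
    rw [← hv]
    simp [sub_mulVec, add_mulVec, ← mulVec_mulVec, h]

theorem pairwise_inner_mulVec_eq_zero {C : Matrix m n 𝕜} {v : ι → EuclideanSpace 𝕜 n}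
    (hv : Orthonormal 𝕜 v) (hC : ∀ j, ∃ c : 𝕜, (Cᴴ * C) *ᵥ v j = c • v j) :
    Pairwise fun i j => inner 𝕜 (WithLp.toLp 2 (C *ᵥ v i)) (WithLp.toLp 2 (C *ᵥ v j)) = 0 := by
  intro i j hij
  obtain ⟨c, hc⟩ := hC j
  have hvij : star ⇑(v i) ⬝ᵥ ⇑(v j) = 0 := by
    rw [dotProduct_comm]
    exact hv.inner_eq_zero hij
  rw [EuclideanSpace.inner_toLp_toLp, dotProduct_comm, star_mulVec, ← dotProduct_mulVec,
    mulVec_mulVec, hc, dotProduct_smul, hvij, smul_zero]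

theorem star_toMatrix_mul_mul_toMatrix_eq_diagonal [DecidableEq n]
    (u v : OrthonormalBasis n 𝕜 (EuclideanSpace 𝕜 n)) {A : Matrix n n 𝕜} {d : n → 𝕜}
    (h : ∀ j, A *ᵥ v j = d j • u j) :
    star ((EuclideanSpace.basisFun n 𝕜).toBasis.toMatrix u) * A *
      (EuclideanSpace.basisFun n 𝕜).toBasis.toMatrix v = diagonal d := by
  have hcol : A * (EuclideanSpace.basisFun n 𝕜).toBasis.toMatrix v =
      (EuclideanSpace.basisFun n 𝕜).toBasis.toMatrix u * diagonal d := by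
    ext i j
    rw [Matrix.mul_diagonal]
    simpa [Matrix.mul_apply, Module.Basis.toMatrix_apply, mulVec, dotProduct, mul_comm] using
      congrFun (h j) i
  rw [Matrix.mul_assoc, hcol, ← Matrix.mul_assoc, star_eq_conjTranspose,
    OrthonormalBasis.toMatrix_orthonormalBasis_conjTranspose_mul_self, Matrix.one_mul]

def IsOrtho (A B : Matrix m n 𝕜) : Prop := A * Bᴴ = 0 ∧ Aᴴ * B = 0

theorem IsOrtho.unitary_mul_mul [DecidableEq m] [DecidableEq n] {A B : Matrix m n 𝕜}
    {U : Matrix m m 𝕜} {V : Matrix n n 𝕜} (hU : U ∈ unitaryGroup m 𝕜) (hV : V ∈ unitaryGroup n 𝕜)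
    (h : IsOrtho A B) : IsOrtho (U * A * V) (U * B * V) := by
  have hUU : Uᴴ * U = 1 := mem_unitaryGroup_iff'.1 hU
  have hVV : V * Vᴴ = 1 := mem_unitaryGroup_iff.1 hV
  constructor
  · calc U * A * V * (U * B * V)ᴴ = U * A * (V * Vᴴ) * Bᴴ * Uᴴ := by
          simp only [conjTranspose_mul, Matrix.mul_assoc]
      _ = 0 := by rw [hVV, Matrix.mul_one, Matrix.mul_assoc U, h.1]; simp
  · calc (U * A * V)ᴴ * (U * B * V) = Vᴴ * Aᴴ * (Uᴴ * U) * B * V := by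
          simp only [conjTranspose_mul, Matrix.mul_assoc]
      _ = 0 := by rw [hUU, Matrix.mul_one, Matrix.mul_assoc Vᴴ, h.2]; simp

theorem isOrtho_unitary_mul_mul_iff [DecidableEq m] [DecidableEq n] {A B : Matrix m n 𝕜}
    {U : Matrix m m 𝕜} {V : Matrix n n 𝕜} (hU : U ∈ unitaryGroup m 𝕜) (hV : V ∈ unitaryGroup n 𝕜) :
    IsOrtho (U * A * V) (U * B * V) ↔ IsOrtho A B := by
  refine ⟨fun h => ?_, IsOrtho.unitary_mul_mul hU hV⟩
  have cancel : ∀ X : Matrix m n 𝕜, star U * (U * X * V) * star V = X := fun X => by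
    simp only [← Matrix.mul_assoc, mem_unitaryGroup_iff'.1 hU, Matrix.one_mul]
    rw [Matrix.mul_assoc, mem_unitaryGroup_iff.1 hV, Matrix.mul_one]
  simpa only [cancel] using h.unitary_mul_mul (Unitary.star_mem hU) (Unitary.star_mem hV)

theorem isOrtho_diagonal [DecidableEq n] {a b : n → 𝕜} (hab : ∀ i, a i * b i = 0) :
    IsOrtho (diagonal a) (diagonal b) := by
  constructor <;>
  · rw [diagonal_conjTranspose, diagonal_mul_diagonal, diagonal_eq_zero]
    funext i
    simpa [or_comm] using mul_eq_zero.1 (hab i)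

theorem IsOrtho.exists_unitary_mul_mul_eq_diagonal [DecidableEq n] {A B : Matrix n n 𝕜}
    (h : IsOrtho A B) :
    ∃ U ∈ unitaryGroup n 𝕜, ∃ V ∈ unitaryGroup n 𝕜, ∃ a b : n → ℝ,
      (∀ i, 0 ≤ a i) ∧ (∀ i, 0 ≤ b i) ∧ (∀ i, a i * b i = 0) ∧
      U * A * V = diagonal (fun i => (a i : 𝕜)) ∧ U * B * V = diagonal (fun i => (b i : 𝕜)) := by
  obtain ⟨hAB, hAhB⟩ := h
  have hM : (Aᴴ * A - Bᴴ * B).IsHermitian :=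
    (isHermitian_conjTranspose_mul_self A).sub (isHermitian_conjTranspose_mul_self B)
  set v := hM.eigenvectorBasis
  have hv : ∀ j, (Aᴴ * A - Bᴴ * B) *ᵥ v j = hM.eigenvalues j • v j :=
    hM.mulVec_eigenvectorBasis
  have hsplit : ∀ j, A *ᵥ v j = 0 ∨ B *ᵥ v j = 0 := fun j =>
    mulVec_eq_zero_or_mulVec_eq_zero_of_mul_conjTranspose_eq_zero hAB (hv j)
  have heig : ∀ j, ∃ c : 𝕜, ((A + B)ᴴ * (A + B)) *ᵥ v j = c • v j := fun j =>
    exists_conjTranspose_add_mul_add_mulVec_eq_smul hAhB (hv j) (hsplit j)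
  obtain ⟨u, hu⟩ := exists_orthonormalBasis_eq_norm_smul_of_pairwise_inner_eq_zero (by simp)
    (pairwise_inner_mulVec_eq_zero v.orthonormal heig)
  set a : n → ℝ := fun j => ‖WithLp.toLp 2 (A *ᵥ v j)‖
  set b : n → ℝ := fun j => ‖WithLp.toLp 2 (B *ᵥ v j)‖
  have hAu : ∀ j, A *ᵥ v j = (a j : 𝕜) • u j := by
    intro j
    rcases hsplit j with h | h
    · simp [a, h]
    · simpa [a, h, add_mulVec] using congrArg WithLp.ofLp (hu j)
  have hBu : ∀ j, B *ᵥ v j = (b j : 𝕜) • u j := by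
    intro j
    rcases hsplit j with h | h
    · simpa [b, h, add_mulVec] using congrArg WithLp.ofLp (hu j)
    · simp [b, h]
  let e := EuclideanSpace.basisFun n 𝕜
  refine ⟨_, Unitary.star_mem (e.toMatrix_orthonormalBasis_mem_unitary u),
    _, e.toMatrix_orthonormalBasis_mem_unitary v, a, b,
    fun _ => norm_nonneg _, fun _ => norm_nonneg _, fun j => ?_,
    star_toMatrix_mul_mul_toMatrix_eq_diagonal u v hAu,
    star_toMatrix_mul_mul_toMatrix_eq_diagonal u v hBu⟩
  rcases hsplit j with h | h <;> simp [a, b, h]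

end Matrix

/-- A B* = A* B = 0 iff A and B are simultaneously "diagonalizable" by unitaries
into nonnegative diagonal matrices with disjoint supports. -/
theorem orthogonal_iff_simultaneous_diagonal (n : ℕ)
    (A B : Matrix (Fin n) (Fin n) ℂ) :
    (A * Bᴴ = 0 ∧ Aᴴ * B = 0) ↔
      ∃ U ∈ Matrix.unitaryGroup (Fin n) ℂ, ∃ V ∈ Matrix.unitaryGroup (Fin n) ℂ,
        ∃ a b : Fin n → ℝ,
          (∀ i, 0 ≤ a i) ∧ (∀ i, 0 ≤ b i) ∧ (∀ i, a i * b i = 0) ∧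
          U * A * V = Matrix.diagonal (fun i => (a i : ℂ)) ∧
          U * B * V = Matrix.diagonal (fun i => (b i : ℂ)) := by
  refine ⟨IsOrtho.exists_unitary_mul_mul_eq_diagonal, ?_⟩
  rintro ⟨U, hU, V, hV, a, b, -, -, hab, hA, hB⟩
  refine (isOrtho_unitary_mul_mul_iff hU hV).1 ?_
  rw [hA, hB]
  exact isOrtho_diagonal fun i => by exact_mod_cast hab i
end

section
/- Let A ∈ M_n(ℂ) be positive semidefinite and B ∈ M_n(ℂ) Hermitian. If every eigenvalue of AB is 0, then there exists a unitary U ∈ M_n(ℂ) and an integer 0 ≤ s ≤ n such that UAU* = A_1 ⊕ 0 with A_1 ∈ M_s invertible, and UBU* has the block form [[0, X],[X*, B_1]] with the top-left s×s block equal to zero. -/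
open Matrix Kronecker ComplexOrder

/-!
Diagonalize `A` by a unitary, ordering its positive eigenvalues first, so that `A` becomes
`A₁ ⊕ 0` with `A₁` positive definite. Writing the conjugated `B` in blocks `[[C, X], [Xᴴ, B₁]]`,
the product `AB` becomes block upper triangular with diagonal blocks `A₁C` and `0`, so `A₁C` has
spectrum `{0}`. Factoring `A₁ = RᴴR` with `R` invertible, `A₁C = Rᴴ(RC)` has the same nonzero
spectrum as the Hermitian matrix `RCRᴴ`, which is therefore `0`; hence `C = 0`.
-/

theorem Fintype.exists_equiv_finSum_of_pred {m : Type*} [Fintype m] {n : ℕ}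
    (hn : Fintype.card m = n) (P : m → Prop) [DecidablePred P] :
    ∃ s, ∃ _ : s ≤ n, ∃ e : m ≃ Fin s ⊕ Fin (n - s),
      (∀ k, P (e.symm (Sum.inl k))) ∧ ∀ k, ¬P (e.symm (Sum.inr k)) := by
  have hcompl : Fintype.card {i // ¬P i} = n - Fintype.card {i // P i} := by
    rw [Fintype.card_subtype_compl, hn]
  refine ⟨_, hn ▸ Fintype.card_subtype_le P,
    (Equiv.sumCompl P).symm.trans ((Fintype.equivFin _).sumCongr
      (Fintype.equivFinOfCardEq hcompl)), fun k => ?_, fun k => ?_⟩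
  · simpa using ((Fintype.equivFin _).symm k).2
  · simpa using ((Fintype.equivFinOfCardEq hcompl).symm k).2

def finSumFinSubEquiv {s n : ℕ} (hs : s ≤ n) : Fin s ⊕ Fin (n - s) ≃ Fin n :=
  finSumFinEquiv.trans (finCongr (Nat.add_sub_cancel' hs))

namespace Matrix

variable {m p q α 𝕜 : Type*} [RCLike 𝕜]

theorem submatrix_mul_mul_conjTranspose_submatrix [Fintype m] [CommRing α] [StarRing α]
    (U M : Matrix m m α) (σ : m ≃ m) :
    U.submatrix σ id * M * (U.submatrix σ id)ᴴ = (U * M * Uᴴ).submatrix σ σ := by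
  rw [conjTranspose_submatrix, ← submatrix_id_id M, ← submatrix_mul_equiv _ _ _ (.refl m),
    ← submatrix_mul_equiv _ _ _ (.refl m)]
  rfl

theorem submatrix_mem_unitaryGroup [Fintype m] [DecidableEq m] [CommRing α] [StarRing α]
    {U : Matrix m m α} (hU : U ∈ unitaryGroup m α) (σ : m ≃ m) :
    U.submatrix σ id ∈ unitaryGroup m α := by
  have h := submatrix_mul_mul_conjTranspose_submatrix U 1 σ
  rw [mul_one, mul_one] at h
  rw [mem_unitaryGroup_iff, star_eq_conjTranspose, h, ← star_eq_conjTranspose,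
    mem_unitaryGroup_iff.mp hU, submatrix_one_equiv]

theorem reindex_diagonal_eq_fromBlocks [DecidableEq m] [DecidableEq p] [DecidableEq q] [Zero α]
    (e : m ≃ p ⊕ q) (d : m → α) (hd : ∀ k, d (e.symm (Sum.inr k)) = 0) :
    reindex e e (diagonal d) = fromBlocks (diagonal fun k => d (e.symm (Sum.inl k))) 0 0 0 := by
  rw [reindex_apply, submatrix_diagonal_equiv, ← diagonal_zero, fromBlocks_diagonal]
  congr 1
  funext k
  cases k <;> simp [hd]

theorem PosSemidef.exists_unitary_reindex_eq_fromBlocks {n : ℕ} {A : Matrix (Fin n) (Fin n) 𝕜}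
    (hA : A.PosSemidef) :
    ∃ s, ∃ hs : s ≤ n, ∃ U ∈ unitaryGroup (Fin n) 𝕜, ∃ A₁ : Matrix (Fin s) (Fin s) 𝕜,
      A₁.PosDef ∧
        reindex (finSumFinSubEquiv hs).symm (finSumFinSubEquiv hs).symm (U * A * Uᴴ) =
          fromBlocks A₁ 0 0 0 := by
  classical
  set ev := hA.1.eigenvalues
  obtain ⟨s, hs, e, hpos, hzero⟩ :=
    Fintype.exists_equiv_finSum_of_pred (Fintype.card_fin n) (fun i => ev i ≠ 0)
  set W : Matrix (Fin n) (Fin n) 𝕜 := ↑hA.1.eigenvectorUnitary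
  set σ := (finSumFinSubEquiv hs).symm.trans e.symm
  refine ⟨s, hs, (star W).submatrix σ id,
    submatrix_mem_unitaryGroup (star hA.1.eigenvectorUnitary).2 σ,
    diagonal fun k => (ev (e.symm (Sum.inl k)) : 𝕜), ?_, ?_⟩
  · exact posDef_diagonal_iff.mpr fun k =>
      RCLike.ofReal_pos.mpr ((hA.eigenvalues_nonneg _).lt_of_ne' (hpos k))
  · have hdiag : star W * A * W = diagonal (RCLike.ofReal ∘ ev) := by
      simpa using hA.1.conjStarAlgAut_star_eigenvectorUnitary
    have hσ : ∀ M : Matrix (Fin n) (Fin n) 𝕜, reindex (finSumFinSubEquiv hs).symm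
        (finSumFinSubEquiv hs).symm (M.submatrix σ σ) = reindex e e M := fun M => by
      ext i j; simp [σ]
    rw [submatrix_mul_mul_conjTranspose_submatrix, ← star_eq_conjTranspose, star_star, hdiag, hσ]
    exact reindex_diagonal_eq_fromBlocks e _ fun k => by simpa using hzero k

theorem IsHermitian.fromBlocks_toBlocks [InvolutiveStar α] {N : Matrix (p ⊕ q) (p ⊕ q) α}
    (hN : N.IsHermitian) :
    Matrix.fromBlocks N.toBlocks₁₁ N.toBlocks₁₂ N.toBlocks₁₂ᴴ N.toBlocks₂₂ = N := by
  rw [(isHermitian_fromBlocks_iff.mp (N.fromBlocks_toBlocks.symm ▸ hN)).2.1,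
    Matrix.fromBlocks_toBlocks]

theorem spectrum_subset_spectrum_fromBlocks_zero₂₁ {K : Type*} [Field K] [Fintype p] [Fintype q]
    [DecidableEq p] [DecidableEq q] (A : Matrix p p K) (B : Matrix p q K) (D : Matrix q q K) :
    spectrum K A ⊆ spectrum K (fromBlocks A B 0 D) := by
  intro μ hμ
  rw [spectrum.mem_iff, isUnit_iff_isUnit_det, isUnit_iff_ne_zero, not_not] at hμ ⊢
  have hblocks : algebraMap K _ μ - fromBlocks A B 0 D =
      fromBlocks (algebraMap K _ μ - A) (-B) 0 (algebraMap K _ μ - D) := by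
    ext (i | i) (j | j) <;> simp [algebraMap_eq_diagonal, diagonal_apply]
  rw [hblocks, det_fromBlocks_zero₂₁, hμ, zero_mul]

theorem IsHermitian.eq_zero_of_spectrum_subset_zero [Fintype m] [DecidableEq m]
    {H : Matrix m m 𝕜} (hH : H.IsHermitian) (h : spectrum 𝕜 H ⊆ {0}) : H = 0 := by
  refine hH.eigenvalues_eq_zero_iff.mp (funext fun i => ?_)
  have hi : (hH.eigenvalues i : 𝕜) ∈ spectrum 𝕜 H := by
    rw [hH.spectrum_eq_image_range]
    exact ⟨_, ⟨i, rfl⟩, rfl⟩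
  simpa using h hi

open scoped MatrixOrder in
theorem PosDef.eq_zero_of_spectrum_mul_subset_zero [Fintype m] [DecidableEq m]
    {A C : Matrix m m 𝕜} (hA : A.PosDef) (hC : C.IsHermitian) (h : spectrum 𝕜 (A * C) ⊆ {0}) :
    C = 0 := by
  obtain ⟨R, rfl⟩ := CStarAlgebra.nonneg_iff_eq_star_mul_self.mp hA.posSemidef.nonneg
  have hR : IsUnit R := by
    rw [isUnit_iff_isUnit_det]
    exact isUnit_of_mul_isUnit_right (det_mul (star R) R ▸ (isUnit_iff_isUnit_det _).mp hA.isUnit)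
  have hRCR : spectrum 𝕜 (R * C * Rᴴ) ⊆ {0} := by
    intro μ hμ
    by_contra hμ0
    have hμ' : μ ∈ spectrum 𝕜 (star R * R * C) \ {0} := by
      rw [mul_assoc, spectrum.nonzero_mul_comm]
      exact ⟨hμ, hμ0⟩
    exact hμ'.2 (h hμ'.1)
  have hzero := (isHermitian_mul_mul_conjTranspose R hC).eq_zero_of_spectrum_subset_zero hRCR
  rwa [← star_eq_conjTranspose, hR.star.mul_left_eq_zero, hR.mul_right_eq_zero] at hzero

theorem toBlocks₁₁_eq_zero_of_spectrum_fromBlocks_mul_subset_zero [Fintype p] [Fintype q]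
    [DecidableEq p] [DecidableEq q] {A₁ : Matrix p p 𝕜} (hA₁ : A₁.PosDef)
    {N : Matrix (p ⊕ q) (p ⊕ q) 𝕜} (hN : N.IsHermitian)
    (h : spectrum 𝕜 (fromBlocks A₁ 0 0 0 * N) ⊆ {0}) : N.toBlocks₁₁ = 0 := by
  have hprod : fromBlocks A₁ 0 0 0 * N =
      fromBlocks (A₁ * N.toBlocks₁₁) (A₁ * N.toBlocks₁₂) 0 (0 : Matrix q q 𝕜) := by
    rw [← N.fromBlocks_toBlocks, fromBlocks_multiply]
    simp
  have h₁₁ : N.toBlocks₁₁.IsHermitian :=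
    (isHermitian_fromBlocks_iff.mp (N.fromBlocks_toBlocks.symm ▸ hN)).1
  exact hA₁.eq_zero_of_spectrum_mul_subset_zero h₁₁
    ((spectrum_subset_spectrum_fromBlocks_zero₂₁ _ _ _).trans (hprod ▸ h))

end Matrix

/-- If A is PSD, B Hermitian, and all eigenvalues of AB are 0, then A and B
can be put simultaneously into the stated block forms by a unitary similarity. -/
theorem psd_hermitian_nilpotent_block_form (n : ℕ)
    (A B : Matrix (Fin n) (Fin n) ℂ)
    (hA : A.PosSemidef) (hB : B.IsHermitian)
    (h : ∀ μ ∈ spectrum ℂ (A * B), μ = 0) :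
    ∃ s : ℕ, ∃ hs : s ≤ n, ∃ U ∈ Matrix.unitaryGroup (Fin n) ℂ,
      ∃ A₁ : Matrix (Fin s) (Fin s) ℂ, ∃ X : Matrix (Fin s) (Fin (n - s)) ℂ,
        ∃ B₁ : Matrix (Fin (n - s)) (Fin (n - s)) ℂ,
          IsUnit A₁ ∧
          Matrix.reindex (finSumFinEquiv.trans (finCongr (Nat.add_sub_cancel' hs))).symm
              (finSumFinEquiv.trans (finCongr (Nat.add_sub_cancel' hs))).symm
              (U * A * Uᴴ) = Matrix.fromBlocks A₁ 0 0 0 ∧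
          Matrix.reindex (finSumFinEquiv.trans (finCongr (Nat.add_sub_cancel' hs))).symm
              (finSumFinEquiv.trans (finCongr (Nat.add_sub_cancel' hs))).symm
              (U * B * Uᴴ) = Matrix.fromBlocks 0 X Xᴴ B₁ := by
  obtain ⟨s, hs, U, hU, A₁, hA₁, hAblock⟩ := hA.exists_unitary_reindex_eq_fromBlocks
  let φ : Matrix (Fin n) (Fin n) ℂ ≃ₐ[ℂ] Matrix (Fin s ⊕ Fin (n - s)) (Fin s ⊕ Fin (n - s)) ℂ :=
    (Unitary.conjStarAlgAut ℂ _ ⟨U, hU⟩).toAlgEquiv.trans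
      (reindexAlgEquiv ℂ ℂ (finSumFinSubEquiv hs).symm)
  have hφ : ∀ M, φ M = reindex (finSumFinSubEquiv hs).symm (finSumFinSubEquiv hs).symm
      (U * M * Uᴴ) := fun M => rfl
  have hN : (φ B).IsHermitian := (isHermitian_mul_mul_conjTranspose U hB).submatrix _
  have hspec : spectrum ℂ (fromBlocks A₁ 0 0 0 * φ B) ⊆ {0} := by
    rw [← hAblock, ← hφ, ← map_mul, AlgEquiv.spectrum_eq]
    exact h
  have h₁₁ := toBlocks₁₁_eq_zero_of_spectrum_fromBlocks_mul_subset_zero hA₁ hN hspec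
  exact ⟨s, hs, U, hU, A₁, (φ B).toBlocks₁₂, (φ B).toBlocks₂₂, hA₁.isUnit, hAblock,
    h₁₁ ▸ hN.fromBlocks_toBlocks.symm⟩
end

section
/- Let A = I_s ⊕ 0_{n−s} ∈ M_n(ℂ) with s ≥ k, and let B ∈ M_n(ℂ) be partitioned conformally with A. If ‖A + αB‖_{(k)} = k for all unit complex α, then the diagonal entries b_{jj} of B vanish for 1 ≤ j ≤ k. -/
open Matrix Kronecker

/-- Combinatorial exchange lemma. -/
lemma exists_subset_sum_le {n k : ℕ} (hk1 : 1 ≤ k) (hk : k ≤ n) (μ c : Fin n → ℝ)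
    (hμ : ∀ i, 0 ≤ μ i) (hc0 : ∀ i, 0 ≤ c i) (hc1 : ∀ i, c i ≤ 1)
    (hcs : ∑ i, c i ≤ (k : ℝ)) :
    ∃ T : Finset (Fin n), T.card = k ∧ ∑ i, μ i * c i ≤ ∑ i ∈ T, μ i := by
  have hP : (Finset.univ.powersetCard k : Finset (Finset (Fin n))).Nonempty := by
    rw [Finset.powersetCard_nonempty]
    simpa using hk
  obtain ⟨T, hTmem, hTmax⟩ := Finset.exists_max_image _ (fun T => ∑ i ∈ T, μ i) hP
  rw [Finset.mem_powersetCard_univ] at hTmem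
  refine ⟨T, hTmem, ?_⟩
  have hTne : T.Nonempty := Finset.card_pos.mp (by omega)
  obtain ⟨i0, hi0T, hi0min⟩ := Finset.exists_min_image T μ hTne
  set m := μ i0 with hm
  have hm0 : 0 ≤ m := hμ i0
  -- swap property
  have hswap : ∀ i' ∉ T, μ i' ≤ m := by
    intro i' hi'
    by_contra hlt
    push_neg at hlt
    set T' := insert i' (T.erase i0) with hT'
    have hcard : T'.card = k := by
      rw [hT', Finset.card_insert_of_notMem (fun hmem => hi' (Finset.mem_of_mem_erase hmem)),
        Finset.card_erase_of_mem hi0T]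
      omega
    have hle := hTmax T' (Finset.mem_powersetCard_univ.mpr hcard)
    rw [hT', Finset.sum_insert (fun hmem => hi' (Finset.mem_of_mem_erase hmem)),
      Finset.sum_erase_eq_sub hi0T] at hle
    linarith
  have h1 : ∑ i ∈ Tᶜ, μ i * c i ≤ m * ∑ i ∈ Tᶜ, c i := by
    rw [Finset.mul_sum]
    refine Finset.sum_le_sum fun i hi => ?_
    have := hswap i (by simpa using hi)
    exact mul_le_mul_of_nonneg_right this (hc0 i) |>.trans_eq rfl
  have h2 : ∑ i ∈ Tᶜ, c i ≤ (k : ℝ) - ∑ i ∈ T, c i := by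
    have := Finset.sum_add_sum_compl T c
    linarith
  have h3 : ∑ i ∈ T, (μ i * c i + m * (1 - c i)) ≤ ∑ i ∈ T, μ i := by
    refine Finset.sum_le_sum fun i hi => ?_
    have h4 := hi0min i hi
    nlinarith [hc0 i, hc1 i, hμ i]
  have h5 : ∑ i, μ i * c i = ∑ i ∈ T, μ i * c i + ∑ i ∈ Tᶜ, μ i * c i :=
    (Finset.sum_add_sum_compl T _).symm
  have h6 : ∑ x ∈ T, (μ x * c x + m * (1 - c x))
      = ∑ i ∈ T, μ i * c i + m * ((k : ℝ) - ∑ i ∈ T, c i) := by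
    rw [Finset.sum_add_distrib, ← Finset.mul_sum, Finset.sum_sub_distrib, Finset.sum_const,
      nsmul_eq_mul, mul_one, hTmem]
  nlinarith [h1, h2, h3, h5, h6, mul_le_mul_of_nonneg_left h2 hm0]

/-- equality extraction -/
lemma all_eq_of_sum_le {ι : Type*} (s : Finset ι) (f : ι → ℝ)
    (h1 : ∀ i ∈ s, 2 ≤ f i) (h2 : ∑ i ∈ s, f i ≤ 2 * s.card) : ∀ i ∈ s, f i = 2 := by
  intro i hi
  by_contra hne
  have hlt : 2 < f i := lt_of_le_of_ne (h1 i hi) (Ne.symm hne)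
  have hsum : ∑ _j ∈ s, (2:ℝ) < ∑ j ∈ s, f j :=
    Finset.sum_lt_sum (fun j hj => h1 j hj) ⟨i, hi, hlt⟩
  rw [Finset.sum_const, nsmul_eq_mul] at hsum
  linarith [hsum, h2]

/-- |1+z| + |1-z| = 2 → im z = 0 -/
lemma im_eq_zero_of_abs (z : ℂ) (h : ‖1 + z‖ + ‖1 - z‖ = 2) :
    z.im = 0 := by
  set a := ‖1 + z‖ with ha
  set b := ‖1 - z‖ with hb
  have ha0 : 0 ≤ a := norm_nonneg _
  have hb0 : 0 ≤ b := norm_nonneg _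
  have ha2 : a ^ 2 = (1 + z.re) ^ 2 + z.im ^ 2 := by
    rw [ha, Complex.sq_norm, Complex.normSq_apply]
    simp [Complex.add_re, Complex.add_im]
    ring
  have hb2 : b ^ 2 = (1 - z.re) ^ 2 + z.im ^ 2 := by
    rw [hb, Complex.sq_norm, Complex.normSq_apply]
    simp [Complex.sub_re, Complex.sub_im]
    ring
  have hab : a * b = 1 - z.re ^ 2 - z.im ^ 2 := by nlinarith
  have : (a * b) ^ 2 = a ^ 2 * b ^ 2 := by ring
  nlinarith [sq_nonneg z.im, sq_nonneg z.re]

lemma sum_svals_le_kyFan {ι : Type*} [Fintype ι] [DecidableEq ι]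
    (k : ℕ) (M : Matrix ι ι ℂ) (T : Finset ι) (hT : T.card = k) :
    ∑ i ∈ T, svals M i ≤ kyFan k M := by
  have hsub : {x : ℝ | ∃ s : Finset ι, s.card = k ∧ x = ∑ i ∈ s, svals M i}
      ⊆ Set.range (fun s : Finset ι => ∑ i ∈ s, svals M i) := by
    rintro x ⟨s, _, rfl⟩; exact ⟨s, rfl⟩
  exact le_csSup ((Set.finite_range _).subset hsub).bddAbove ⟨T, hT, rfl⟩

lemma sum_abs_diag_le {n : ℕ} (M : Matrix (Fin n) (Fin n) ℂ) (k : ℕ)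
    (hk1 : 1 ≤ k) (hk : k ≤ n) (S : Finset (Fin n)) (hS : S.card = k)
    (exch : ∀ (μ c : Fin n → ℝ), (∀ i, 0 ≤ μ i) → (∀ i, 0 ≤ c i) → (∀ i, c i ≤ 1) →
      (∑ i, c i ≤ (k : ℝ)) →
      ∃ T : Finset (Fin n), T.card = k ∧ ∑ i, μ i * c i ≤ ∑ i ∈ T, μ i) :
    ∑ j ∈ S, ‖M j j‖ ≤ kyFan k M := by
  classical
  set hH := Matrix.isHermitian_conjTranspose_mul_self M with hHdef
  set V : Matrix (Fin n) (Fin n) ℂ := (hH.eigenvectorUnitary : Matrix (Fin n) (Fin n) ℂ) with hV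
  set μ : Fin n → ℝ := hH.eigenvalues with hμdef
  have hμ0 : ∀ i, 0 ≤ μ i := fun i => Matrix.eigenvalues_conjTranspose_mul_self_nonneg M i
  set σ : Fin n → ℝ := svals M with hσdef
  have hσ0 : ∀ i, 0 ≤ σ i := fun i => Real.sqrt_nonneg _
  have hσsq : ∀ i, σ i ^ 2 = μ i := fun i => Real.sq_sqrt (hμ0 i)
  have hσz : ∀ i, σ i = 0 → μ i = 0 := by
    intro i h
    have := hσsq i
    rw [h] at this
    simpa using this.symm
  set N : Matrix (Fin n) (Fin n) ℂ := M * V with hN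
  have hVU : star V * V = 1 := Matrix.mem_unitaryGroup_iff'.mp hH.eigenvectorUnitary.2
  have hVU' : V * star V = 1 := Matrix.mem_unitaryGroup_iff.mp hH.eigenvectorUnitary.2
  have hNN : Nᴴ * N = Matrix.diagonal (fun i => (μ i : ℂ)) := by
    have h1 : star V * (Mᴴ * M) * V = Matrix.diagonal (fun i => (μ i : ℂ)) := by
      have h0 := hH.conjStarAlgAut_star_eigenvectorUnitary
      rw [Unitary.conjStarAlgAut_apply, Unitary.coe_star, star_star] at h0
      exact h0
    calc Nᴴ * N = (star V * (Mᴴ * M)) * V := by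
          rw [hN, Matrix.conjTranspose_mul, Matrix.star_eq_conjTranspose]
          noncomm_ring
      _ = Matrix.diagonal (fun i => (μ i : ℂ)) := by
          rw [mul_assoc] at h1 ⊢
          rw [h1]
  -- column norms of N
  have hcolN : ∀ i, ∑ j, Complex.normSq (N j i) = μ i := by
    intro i
    have hent := congrFun (congrFun hNN i) i
    rw [Matrix.mul_apply, Matrix.diagonal_apply_eq] at hent
    have : ∑ j, (starRingEnd ℂ) (N j i) * N j i = ((∑ j, Complex.normSq (N j i) : ℝ) : ℂ) := by
      push_cast
      refine Finset.sum_congr rfl fun j _ => ?_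
      rw [← Complex.normSq_eq_conj_mul_self]
    simp only [Matrix.conjTranspose_apply, RCLike.star_def] at hent
    rw [this] at hent
    exact_mod_cast hent
  -- U matrix
  set U : Matrix (Fin n) (Fin n) ℂ :=
    Matrix.of (fun j i => if σ i = 0 then 0 else ((σ i : ℂ))⁻¹ * N j i) with hUdef
  have hσμ : ∀ i, σ i = Real.sqrt (μ i) := fun i => rfl
  have hμσ : ∀ i, σ i ≠ 0 → μ i ≠ 0 := by
    intro i hi h0
    exact hi (by rw [hσμ i, h0, Real.sqrt_zero])
  have hNzero : ∀ i, σ i = 0 → ∀ j, N j i = 0 := by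
    intro i hi j
    have h0 : ∑ j, Complex.normSq (N j i) = 0 := by rw [hcolN i, hσz i hi]
    have := (Finset.sum_eq_zero_iff_of_nonneg
      (fun j _ => Complex.normSq_nonneg _)).mp h0 j (Finset.mem_univ j)
    exact Complex.normSq_eq_zero.mp this
  have hNU : ∀ j i, N j i = (σ i : ℂ) * U j i := by
    intro j i
    by_cases hi : σ i = 0
    · simp [hUdef, hi, hNzero i hi j]
    · have hne : (σ i : ℂ) ≠ 0 := by exact_mod_cast hi
      simp only [hUdef, Matrix.of_apply, if_neg hi]
      field_simp
  have hμmul : ∀ i, σ i ≠ 0 → (σ i * σ i)⁻¹ * μ i = 1 := by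
    intro i hi
    have h1 : σ i * σ i = μ i := by have := hσsq i; nlinarith
    rw [h1, inv_mul_cancel₀ (hμσ i hi)]
  have hUcol : ∀ i, ∑ j, Complex.normSq (U j i) ≤ 1 := by
    intro i
    by_cases hi : σ i = 0
    · simp [hUdef, hi]
    · have hsum : ∑ j, Complex.normSq (U j i) = (σ i * σ i)⁻¹ * μ i := by
        rw [← hcolN i, Finset.mul_sum]
        refine Finset.sum_congr rfl fun j _ => ?_
        simp [hUdef, hi, Complex.normSq_mul, Complex.normSq_inv, Complex.normSq_ofReal]
      rw [hsum, hμmul i hi]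
  have hUU : Uᴴ * U = Matrix.diagonal (fun i => if σ i = 0 then (0:ℂ) else 1) := by
    ext i i'
    rw [Matrix.mul_apply]
    by_cases hi : σ i = 0
    · have hz : ∀ j, Uᴴ i j * U j i' = 0 := by
        intro j
        rw [Matrix.conjTranspose_apply]
        simp [hUdef, hi]
      rw [Finset.sum_congr rfl fun j _ => hz j, Finset.sum_const_zero, Matrix.diagonal_apply]
      by_cases hii : i = i'
      · rw [if_pos hii, if_pos hi]
      · rw [if_neg hii]
    · by_cases hi' : σ i' = 0
      · have hii' : i ≠ i' := fun h => hi (h ▸ hi')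
        simp [hUdef, hi', Matrix.diagonal_apply_ne _ hii']
      · have h2 := congrFun (congrFun hNN i) i'
        rw [Matrix.mul_apply] at h2
        have hstep : ∑ j, Uᴴ i j * U j i'
            = ((σ i : ℂ))⁻¹ * ((σ i' : ℂ))⁻¹ * ∑ j, Nᴴ i j * N j i' := by
          rw [Finset.mul_sum]
          refine Finset.sum_congr rfl fun j _ => ?_
          simp only [Matrix.conjTranspose_apply, hUdef, Matrix.of_apply, if_neg hi, if_neg hi',
            RCLike.star_def]
          rw [_root_.map_mul (starRingEnd ℂ), map_inv₀, Complex.conj_ofReal]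
          ring
        rw [hstep, h2]
        by_cases hii : i = i'
        · subst hii
          rw [Matrix.diagonal_apply_eq, Matrix.diagonal_apply_eq, if_neg hi]
          have : ((σ i : ℂ))⁻¹ * ((σ i : ℂ))⁻¹ * ((μ i : ℝ) : ℂ) = (((σ i * σ i)⁻¹ * μ i : ℝ) : ℂ) := by
            push_cast
            ring
          rw [this, hμmul i hi]
          norm_num
        · rw [Matrix.diagonal_apply_ne _ hii, Matrix.diagonal_apply_ne _ hii, mul_zero]
  have hUdiagε : U * Matrix.diagonal (fun i => if σ i = 0 then (0:ℂ) else 1) = U := by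
    ext j i
    rw [Matrix.mul_diagonal]
    by_cases hi : σ i = 0
    · simp [hUdef, hi]
    · simp [hi]
  have hUrow : ∀ j, ∑ i, Complex.normSq (U j i) ≤ 1 := by
    intro j
    set P := U * Uᴴ with hP
    have hPP : P * P = P := by
      rw [hP]
      calc U * Uᴴ * (U * Uᴴ) = U * (Uᴴ * U) * Uᴴ := by noncomm_ring
        _ = U * Uᴴ := by rw [hUU, hUdiagε]
    have hPjj : P j j = ((∑ i, Complex.normSq (U j i) : ℝ) : ℂ) := by
      rw [hP, Matrix.mul_apply]
      push_cast
      refine Finset.sum_congr rfl fun i _ => ?_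
      rw [Matrix.conjTranspose_apply, RCLike.star_def, Complex.mul_conj]
    set p := ∑ i, Complex.normSq (U j i) with hp
    have hp0 : 0 ≤ p := Finset.sum_nonneg fun i _ => Complex.normSq_nonneg _
    have hPHerm : Pᴴ = P := by
      rw [hP, Matrix.conjTranspose_mul, Matrix.conjTranspose_conjTranspose]
    have hP2 : P j j = ∑ l, P j l * (starRingEnd ℂ) (P j l) := by
      conv_lhs => rw [← hPP]
      rw [Matrix.mul_apply]
      refine Finset.sum_congr rfl fun l _ => ?_
      congr 1
      calc P l j = Pᴴ l j := by rw [hPHerm]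
        _ = (starRingEnd ℂ) (P j l) := by rw [Matrix.conjTranspose_apply, RCLike.star_def]
    have hreal : p = ∑ l, Complex.normSq (P j l) := by
      have hc : ((p:ℝ):ℂ) = ((∑ l, Complex.normSq (P j l) : ℝ) : ℂ) := by
        rw [← hPjj, hP2]
        push_cast
        refine Finset.sum_congr rfl fun l _ => ?_
        rw [Complex.mul_conj]
      exact_mod_cast hc
    have hterm : Complex.normSq (P j j) ≤ ∑ l, Complex.normSq (P j l) :=
      Finset.single_le_sum (fun l _ => Complex.normSq_nonneg _) (Finset.mem_univ j)
    rw [hPjj, Complex.normSq_ofReal] at hterm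
    nlinarith [hreal, hterm, hp0]
  have hVrow : ∀ j, ∑ i, Complex.normSq (V j i) = 1 := by
    intro j
    have hent := congrFun (congrFun hVU' j) j
    rw [Matrix.mul_apply] at hent
    have h1 : ∑ i, V j i * star V i j = ((∑ i, Complex.normSq (V j i) : ℝ) : ℂ) := by
      push_cast
      refine Finset.sum_congr rfl fun i _ => ?_
      rw [Matrix.star_apply, RCLike.star_def, Complex.mul_conj]
    rw [h1, Matrix.one_apply_eq] at hent
    exact_mod_cast hent
  have hVcol : ∀ i, ∑ j, Complex.normSq (V j i) = 1 := by
    intro i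
    have hent := congrFun (congrFun hVU i) i
    rw [Matrix.mul_apply] at hent
    have h1 : ∑ j, star V i j * V j i = ((∑ j, Complex.normSq (V j i) : ℝ) : ℂ) := by
      push_cast
      refine Finset.sum_congr rfl fun j _ => ?_
      rw [Matrix.star_apply, RCLike.star_def, mul_comm, Complex.mul_conj]
    rw [h1, Matrix.one_apply_eq] at hent
    exact_mod_cast hent
  have hdiag : ∀ j, M j j = ∑ i, N j i * (starRingEnd ℂ) (V j i) := by
    intro j
    have hMN : M = N * star V := by rw [hN, mul_assoc, hVU', mul_one]
    conv_lhs => rw [hMN]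
    rw [Matrix.mul_apply]
    refine Finset.sum_congr rfl fun i _ => ?_
    rw [Matrix.star_apply, RCLike.star_def]
  set c : Fin n → ℝ := fun i => ∑ j ∈ S, ‖U j i‖ * ‖V j i‖ with hcdef
  have hterm1 : ∀ j i, ‖N j i * (starRingEnd ℂ) (V j i)‖
      = σ i * (‖U j i‖ * ‖V j i‖) := by
    intro j i
    rw [norm_mul, Complex.norm_conj, hNU j i, norm_mul,
      Complex.norm_real, Real.norm_of_nonneg (hσ0 i)]
    ring
  have h1 : ∀ j, ‖M j j‖
      ≤ ∑ i, σ i * (‖U j i‖ * ‖V j i‖) := by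
    intro j
    rw [hdiag j]
    refine (norm_sum_le _ _).trans (le_of_eq ?_)
    exact Finset.sum_congr rfl fun i _ => hterm1 j i
  have hmain : ∑ j ∈ S, ‖M j j‖ ≤ ∑ i, σ i * c i := by
    calc ∑ j ∈ S, ‖M j j‖
        ≤ ∑ j ∈ S, ∑ i, σ i * (‖U j i‖ * ‖V j i‖) :=
          Finset.sum_le_sum fun j _ => h1 j
      _ = ∑ i, σ i * c i := by
          rw [Finset.sum_comm]
          exact Finset.sum_congr rfl fun i _ => (Finset.mul_sum _ _ _).symm
  have hc0 : ∀ i, 0 ≤ c i :=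
    fun i => Finset.sum_nonneg fun j _ => mul_nonneg (norm_nonneg _) (norm_nonneg _)
  have hsubS : ∀ (W : Matrix (Fin n) (Fin n) ℂ) i,
      ∑ j ∈ S, Complex.normSq (W j i) ≤ ∑ j, Complex.normSq (W j i) :=
    fun W i => Finset.sum_le_sum_of_subset_of_nonneg (Finset.subset_univ S)
      (fun j _ _ => Complex.normSq_nonneg _)
  have hamgm : ∀ (z w : ℂ), ‖z‖ * ‖w‖
      ≤ (Complex.normSq z + Complex.normSq w)/2 := by
    intro z w
    rw [← Complex.sq_norm, ← Complex.sq_norm]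
    nlinarith [sq_nonneg (‖z‖ - ‖w‖)]
  have hc1 : ∀ i, c i ≤ 1 := by
    intro i
    have hle : c i ≤ (∑ j ∈ S, Complex.normSq (U j i) + ∑ j ∈ S, Complex.normSq (V j i))/2 := by
      rw [hcdef]
      calc ∑ j ∈ S, ‖U j i‖ * ‖V j i‖
          ≤ ∑ j ∈ S, (Complex.normSq (U j i) + Complex.normSq (V j i))/2 :=
            Finset.sum_le_sum fun j _ => hamgm _ _
        _ = _ := by rw [← Finset.sum_div, Finset.sum_add_distrib]
    have hU' := (hsubS U i).trans (hUcol i)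
    have hV' := (hsubS V i).trans (le_of_eq (hVcol i))
    linarith
  have hcs : ∑ i, c i ≤ (k : ℝ) := by
    have : ∑ i, c i = ∑ j ∈ S, ∑ i, ‖U j i‖ * ‖V j i‖ :=
      Finset.sum_comm
    rw [this]
    calc ∑ j ∈ S, ∑ i, ‖U j i‖ * ‖V j i‖
        ≤ ∑ j ∈ S, (1:ℝ) := by
          refine Finset.sum_le_sum fun j _ => ?_
          calc ∑ i, ‖U j i‖ * ‖V j i‖
              ≤ ∑ i, (Complex.normSq (U j i) + Complex.normSq (V j i))/2 :=
                Finset.sum_le_sum fun i _ => hamgm _ _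
            _ = (∑ i, Complex.normSq (U j i) + ∑ i, Complex.normSq (V j i))/2 := by
                rw [← Finset.sum_div, Finset.sum_add_distrib]
            _ ≤ 1 := by
                have := hUrow j
                have := hVrow j
                linarith
      _ = (k : ℝ) := by rw [Finset.sum_const, hS, nsmul_eq_mul, mul_one]
  obtain ⟨T, hT, hle⟩ := exch σ c hσ0 hc0 hc1 hcs
  exact hmain.trans (hle.trans (sum_svals_le_kyFan k M T hT))

/-- If A = I_s ⊕ 0 with s ≥ k and ‖A + αB‖_(k) = k for all unit α, then the
first k diagonal entries of B vanish. -/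
theorem diag_vanish_of_kyFan (n k s : ℕ) (hk : 1 ≤ k) (hks : k ≤ s) (hsn : s ≤ n)
    (B : Matrix (Fin n) (Fin n) ℂ)
    (h : ∀ α : ℂ, ‖α‖ = 1 →
      kyFan k (Matrix.diagonal (fun i : Fin n => if (i : ℕ) < s then (1 : ℂ) else 0)
        + α • B) = k) :
    ∀ j : Fin n, (j : ℕ) < k → B j j = 0 := by
  intro j hj
  have hkn : k ≤ n := hks.trans hsn
  classical
  set S : Finset (Fin n) := Finset.univ.filter (fun j : Fin n => (j : ℕ) < k) with hSdef
  have hScard : S.card = k := by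
    have hinj : Function.Injective (Fin.castLE hkn) := Fin.castLE_injective hkn
    have himg : S = Finset.image (Fin.castLE hkn) Finset.univ := by
      ext x
      constructor
      · intro hx
        rw [hSdef, Finset.mem_filter] at hx
        rw [Finset.mem_image]
        exact ⟨⟨(x : ℕ), hx.2⟩, Finset.mem_univ _, Fin.ext rfl⟩
      · intro hx
        rw [Finset.mem_image] at hx
        obtain ⟨y, -, rfl⟩ := hx
        rw [hSdef, Finset.mem_filter]
        exact ⟨Finset.mem_univ _, y.isLt⟩
    rw [himg, Finset.card_image_of_injective _ hinj, Finset.card_univ, Fintype.card_fin]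
  have key : ∀ α : ℂ, ‖α‖ = 1 → ∑ j' ∈ S, ‖1 + α * B j' j'‖ ≤ (k : ℝ) := by
    intro α hα
    set Mα := Matrix.diagonal (fun i : Fin n => if (i : ℕ) < s then (1 : ℂ) else 0) + α • B
      with hMα
    have h2 := sum_abs_diag_le Mα k hk hkn S hScard
      (fun μ c => exists_subset_sum_le hk hkn μ c)
    rw [h α hα] at h2
    refine le_trans (le_of_eq ?_) h2
    refine Finset.sum_congr rfl fun j' hj' => ?_
    rw [hSdef, Finset.mem_filter] at hj'
    have hj's : (j' : ℕ) < s := lt_of_lt_of_le hj'.2 hks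
    rw [hMα, Matrix.add_apply, Matrix.diagonal_apply_eq, if_pos hj's, Matrix.smul_apply,
      smul_eq_mul]
  have h1 := key 1 (by norm_num)
  have h2 := key (-1) (by norm_num)
  have h3 := key Complex.I (by simp)
  have h4 := key (-Complex.I) (by simp)
  have h1' : ∑ j' ∈ S, ‖1 + B j' j'‖ ≤ (k : ℝ) := by
    refine le_trans (le_of_eq (Finset.sum_congr rfl fun j' _ => ?_)) h1
    congr 1
    ring
  have h2' : ∑ j' ∈ S, ‖1 - B j' j'‖ ≤ (k : ℝ) := by
    refine le_trans (le_of_eq (Finset.sum_congr rfl fun j' _ => ?_)) h2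
    congr 1
    ring
  have h4' : ∑ j' ∈ S, ‖1 - Complex.I * B j' j'‖ ≤ (k : ℝ) := by
    refine le_trans (le_of_eq (Finset.sum_congr rfl fun j' _ => ?_)) h4
    congr 1
    ring
  have hjS : j ∈ S := by
    rw [hSdef, Finset.mem_filter]
    exact ⟨Finset.mem_univ _, hj⟩
  -- α = ±1 : imaginary part vanishes
  have hgeq1 : ∀ j' ∈ S, 2 ≤ ‖1 + B j' j'‖ + ‖1 - B j' j'‖ := by
    intro j' _
    calc (2:ℝ) = ‖(2:ℂ)‖ := by norm_num
      _ = ‖(1 + B j' j') + (1 - B j' j')‖ := by norm_num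
      _ ≤ _ := norm_add_le _ _
  have hsum1 : ∑ j' ∈ S, (‖1 + B j' j'‖ + ‖1 - B j' j'‖)
      ≤ 2 * (S.card : ℝ) := by
    rw [Finset.sum_add_distrib, hScard]
    linarith
  have heq1 := all_eq_of_sum_le S _ hgeq1 hsum1 j hjS
  have him : (B j j).im = 0 := im_eq_zero_of_abs _ heq1
  -- α = ±i : real part vanishes
  have hgeq2 : ∀ j' ∈ S, 2 ≤ ‖1 + Complex.I * B j' j'‖
      + ‖1 - Complex.I * B j' j'‖ := by
    intro j' _
    calc (2:ℝ) = ‖(2:ℂ)‖ := by norm_num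
      _ = ‖(1 + Complex.I * B j' j') + (1 - Complex.I * B j' j')‖ := by norm_num
      _ ≤ _ := norm_add_le _ _
  have hsum2 : ∑ j' ∈ S, (‖1 + Complex.I * B j' j'‖
      + ‖1 - Complex.I * B j' j'‖) ≤ 2 * (S.card : ℝ) := by
    rw [Finset.sum_add_distrib, hScard]
    linarith
  have heq2 := all_eq_of_sum_le S _ hgeq2 hsum2 j hjS
  have him2 : (Complex.I * B j j).im = 0 := im_eq_zero_of_abs _ heq2
  have hre : (B j j).re = 0 := by
    simpa [Complex.mul_im] using him2
  exact Complex.ext hre him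
end

section
/- There exists a linear map ψ: M_{mn}(ℂ) → M_{mn}(ℂ) that preserves the Frobenius norm of every matrix (and in particular ‖ψ(A⊗B)‖₂ = ‖A⊗B‖₂ for all A, B) but is not of the form A⊗B ↦ U(φ₁(A)⊗φ₂(B))V with U, V unitary and each φᵢ the identity or transposition. Concretely, the map swapping the (1,mn) and (mn,1) entries of a matrix and fixing all other entries is such a map. -/
open Matrix Kronecker

/-- The Frobenius norm of a complex matrix. -/
noncomputable def frobNorm {ι : Type*} [Fintype ι]
    (A : Matrix ι ι ℂ) : ℝ :=
  Real.sqrt (∑ i, ∑ j, ‖A i j‖ ^ 2)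


-- helper lemmas
lemma mulStdMul {N : ℕ} (U V : Matrix (Fin N) (Fin N) ℂ) (k l i j : Fin N) :
    ((U * Matrix.single k l (1:ℂ) * V : Matrix (Fin N) (Fin N) ℂ)) i j = U i k * V l j := by
  simp [Matrix.mul_apply, Matrix.single, ite_and, Finset.mul_sum, mul_ite, ite_mul,
    Finset.sum_ite_eq, Finset.sum_ite_eq']

lemma stdTranspose {a b : Type*} [DecidableEq a] [DecidableEq b] (i : a) (j : b) :
    (Matrix.single i j (1:ℂ))ᵀ = Matrix.single j i 1 := by
  ext x y
  simp [Matrix.single, Matrix.transpose_apply, and_comm]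

lemma reindexKronStd {m n : ℕ} (p p' : Fin m) (q q' : Fin n) :
    Matrix.reindex finProdFinEquiv finProdFinEquiv
      (Matrix.single p p' (1:ℂ) ⊗ₖ Matrix.single q q' 1) =
    Matrix.single (finProdFinEquiv (p,q)) (finProdFinEquiv (p',q')) 1 := by
  ext i j
  obtain ⟨⟨a,c⟩, rfl⟩ := finProdFinEquiv.surjective i
  obtain ⟨⟨b,d⟩, rfl⟩ := finProdFinEquiv.surjective j
  simp only [Matrix.reindex_apply, Matrix.submatrix_apply, Equiv.symm_apply_apply,
    Matrix.kroneckerMap_apply, Matrix.single, Matrix.of_apply,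
    finProdFinEquiv.injective.eq_iff, Prod.mk.injEq]
  by_cases h1 : p = a <;> by_cases h2 : p' = b <;> by_cases h3 : q = c <;>
    by_cases h4 : q' = d <;> simp [h1, h2, h3, h4]

noncomputable def swapMap {N : ℕ} (a b : Fin N) :
    Matrix (Fin N) (Fin N) ℂ →ₗ[ℂ] Matrix (Fin N) (Fin N) ℂ where
  toFun X := Matrix.of fun i j =>
    if i = a ∧ j = b then X b a else if i = b ∧ j = a then X a b else X i j
  map_add' X Y := by ext i j; simp only [Matrix.of_apply, Matrix.add_apply]; split_ifs <;> rfl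
  map_smul' c X := by ext i j; simp only [Matrix.of_apply, Matrix.smul_apply,
    RingHom.id_apply]; split_ifs <;> rfl

lemma swapMap_norm {N : ℕ} (a b : Fin N) (hab : a ≠ b)
    (X : Matrix (Fin N) (Fin N) ℂ) : frobNorm (swapMap a b X) = frobNorm X := by
  unfold frobNorm
  congr 1
  rw [show (∑ i, ∑ j, ‖(swapMap a b) X i j‖ ^ 2) =
      ∑ p : Fin N × Fin N, ‖(swapMap a b) X p.1 p.2‖ ^ 2 from
    (Fintype.sum_prod_type (fun p : Fin N × Fin N => ‖(swapMap a b) X p.1 p.2‖ ^ 2)).symm,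
    show (∑ i, ∑ j, ‖X i j‖ ^ 2) = ∑ p : Fin N × Fin N, ‖X p.1 p.2‖ ^ 2 from
    (Fintype.sum_prod_type (fun p : Fin N × Fin N => ‖X p.1 p.2‖ ^ 2)).symm,
    ← Equiv.sum_comp (Equiv.swap ((a,b) : Fin N × Fin N) (b,a))
      (fun p => ‖X p.1 p.2‖ ^ 2)]
  refine Finset.sum_congr rfl fun p _ => ?_
  rcases eq_or_ne p (a,b) with rfl | h1
  · simp [swapMap, Equiv.swap_apply_left]
  rcases eq_or_ne p (b,a) with rfl | h2
  · simp [swapMap, Equiv.swap_apply_right, hab, hab.symm]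
  · rw [Equiv.swap_apply_of_ne_of_ne h1 h2]
    obtain ⟨i, j⟩ := p
    have : ¬(i = a ∧ j = b) := by rintro ⟨rfl, rfl⟩; exact h1 rfl
    have h2' : ¬(i = b ∧ j = a) := by rintro ⟨rfl, rfl⟩; exact h2 rfl
    simp [swapMap, this, h2']


lemma swapMap_std {N : ℕ} (a b k l : Fin N)
    (h1 : ¬(k = a ∧ l = b)) (h2 : ¬(k = b ∧ l = a)) :
    swapMap a b (Matrix.single k l (1:ℂ)) = Matrix.single k l 1 := by
  ext i j
  show (if i = a ∧ j = b then _ else if i = b ∧ j = a then _ else _) = _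
  split_ifs with hc hd
  · obtain ⟨rfl, rfl⟩ := hc
    simp only [Matrix.single, Matrix.of_apply]
    split_ifs with h3 h4 <;> first | rfl | (exfalso; tauto)
  · obtain ⟨rfl, rfl⟩ := hd
    simp only [Matrix.single, Matrix.of_apply]
    split_ifs with h3 h4 <;> first | rfl | (exfalso; tauto)
  · rfl

lemma swapMap_std_ab {N : ℕ} (a b : Fin N) (hab : a ≠ b) :
    swapMap a b (Matrix.single a b (1:ℂ)) = Matrix.single b a 1 := by
  ext i j
  show (if i = a ∧ j = b then Matrix.single a b (1:ℂ) b a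
        else if i = b ∧ j = a then Matrix.single a b (1:ℂ) a b
        else Matrix.single a b (1:ℂ) i j) = Matrix.single b a 1 i j
  by_cases hc : i = a ∧ j = b
  · rw [if_pos hc, hc.1, hc.2]
    simp only [Matrix.single, Matrix.of_apply]
    rw [if_neg (fun hx : a = b ∧ b = a => hab hx.1),
      if_neg (fun hx : b = a ∧ a = b => hab hx.2)]
  · by_cases hd : i = b ∧ j = a
    · rw [if_neg hc, if_pos hd, hd.1, hd.2]
      simp [Matrix.single]
    · rw [if_neg hc, if_neg hd]
      simp only [Matrix.single, Matrix.of_apply]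
      rw [if_neg (fun hx : a = i ∧ b = j => hc ⟨hx.1.symm, hx.2.symm⟩),
        if_neg (fun hx : b = i ∧ a = j => hd ⟨hx.1.symm, hx.2.symm⟩)]


/-- There is a Frobenius-norm preserving linear map (the one swapping the
(1,mn) and (mn,1) entries) which is not of the standard tensor form. -/
theorem frobenius_counterexample (m n : ℕ) (hm : 2 ≤ m) (hn : 2 ≤ n) :
    ∃ ψ : Matrix (Fin (m * n)) (Fin (m * n)) ℂ →ₗ[ℂ]
        Matrix (Fin (m * n)) (Fin (m * n)) ℂ,
      (∀ (X : Matrix (Fin (m * n)) (Fin (m * n)) ℂ) (i j : Fin (m * n)),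
        ψ X i j =
          if i = (⟨0, Nat.mul_pos (by omega) (by omega)⟩ : Fin (m * n)) ∧
              j = (⟨m * n - 1, Nat.sub_lt (Nat.mul_pos (by omega) (by omega)) one_pos⟩ : Fin (m * n)) then
            X ⟨m * n - 1, Nat.sub_lt (Nat.mul_pos (by omega) (by omega)) one_pos⟩
              ⟨0, Nat.mul_pos (by omega) (by omega)⟩
          else if i = (⟨m * n - 1, Nat.sub_lt (Nat.mul_pos (by omega) (by omega)) one_pos⟩ : Fin (m * n)) ∧
              j = (⟨0, Nat.mul_pos (by omega) (by omega)⟩ : Fin (m * n)) then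
            X ⟨0, Nat.mul_pos (by omega) (by omega)⟩
              ⟨m * n - 1, Nat.sub_lt (Nat.mul_pos (by omega) (by omega)) one_pos⟩
          else X i j) ∧
      (∀ X, frobNorm (ψ X) = frobNorm X) ∧
      ¬ (∃ U ∈ Matrix.unitaryGroup (Fin (m * n)) ℂ,
          ∃ V ∈ Matrix.unitaryGroup (Fin (m * n)) ℂ,
            ∃ f : Matrix (Fin m) (Fin m) ℂ → Matrix (Fin m) (Fin m) ℂ,
              ∃ g : Matrix (Fin n) (Fin n) ℂ → Matrix (Fin n) (Fin n) ℂ,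
                (f = id ∨ f = Matrix.transpose) ∧ (g = id ∨ g = Matrix.transpose) ∧
                ∀ (A : Matrix (Fin m) (Fin m) ℂ) (B : Matrix (Fin n) (Fin n) ℂ),
                  ψ (Matrix.reindex finProdFinEquiv finProdFinEquiv (A ⊗ₖ B)) =
                    U * Matrix.reindex finProdFinEquiv finProdFinEquiv (f A ⊗ₖ g B) * V) := by
  have h4 : 4 ≤ m * n := Nat.mul_le_mul hm hn
  refine ⟨swapMap ⟨0, Nat.mul_pos (by omega) (by omega)⟩
      ⟨m * n - 1, Nat.sub_lt (Nat.mul_pos (by omega) (by omega)) one_pos⟩,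
    fun X i j => rfl, ?_, ?_⟩
  · intro X
    exact swapMap_norm _ _ (by simp only [ne_eq, Fin.mk.injEq]; omega) X
  · rintro ⟨U, -, V, -, f, g, hf, hg, h⟩
    set z : Fin (m * n) := ⟨0, Nat.mul_pos (by omega) (by omega)⟩ with hz
    set w : Fin (m * n) :=
      ⟨m * n - 1, Nat.sub_lt (Nat.mul_pos (by omega) (by omega)) one_pos⟩ with hw
    have hzw : z ≠ w := by simp only [z, w, ne_eq, Fin.mk.injEq]; omega
    -- arithmetic facts
    have h2n : 2 * n ≤ m * n := Nat.mul_le_mul_right n hm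
    have h5 : n * (m - 1) + n = n * m := by
      rw [← Nat.mul_succ]; congr 1; omega
    have hnm : m * n = n * m := Nat.mul_comm m n
    -- standard basis vectors
    obtain ⟨p0, hp0⟩ : ∃ p : Fin m, (p : ℕ) = 0 := ⟨⟨0, by omega⟩, rfl⟩
    obtain ⟨p1, hp1⟩ : ∃ p : Fin m, (p : ℕ) = m - 1 := ⟨⟨m - 1, by omega⟩, rfl⟩
    obtain ⟨q0, hq0⟩ : ∃ q : Fin n, (q : ℕ) = 0 := ⟨⟨0, by omega⟩, rfl⟩
    obtain ⟨q1, hq1⟩ : ∃ q : Fin n, (q : ℕ) = n - 1 := ⟨⟨n - 1, by omega⟩, rfl⟩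
    have hzval : (z : ℕ) = 0 := rfl
    have hwval : (w : ℕ) = m * n - 1 := rfl
    have ez : finProdFinEquiv (p0, q0) = z := by
      apply Fin.ext; simp only [finProdFinEquiv_apply_val, hp0, hq0, hzval]; omega
    have ew : finProdFinEquiv (p1, q1) = w := by
      apply Fin.ext; simp only [finProdFinEquiv_apply_val, hp1, hq1, hwval]; omega
    -- f and g fix diagonal standard basis matrices
    have hfd : ∀ p : Fin m, f (Matrix.single p p 1) = Matrix.single p p 1 := by
      rcases hf with rfl | rfl
      · intro p; rfl
      · intro p; exact stdTranspose p p
    have hgd : ∀ q : Fin n, g (Matrix.single q q 1) = Matrix.single q q 1 := by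
      rcases hg with rfl | rfl
      · intro q; rfl
      · intro q; exact stdTranspose q q
    -- diagonal equations
    have hdiagEq : ∀ k : Fin (m * n),
        Matrix.single k k (1 : ℂ) = U * Matrix.single k k 1 * V := by
      intro k
      obtain ⟨⟨p, q⟩, rfl⟩ := finProdFinEquiv.surjective k
      have hh := h (Matrix.single p p 1) (Matrix.single q q 1)
      rw [hfd, hgd, reindexKronStd,
        swapMap_std _ _ _ _ (fun ⟨h1, h2⟩ => hzw (h1.symm.trans h2))
          (fun ⟨h1, h2⟩ => hzw (h2.symm.trans h1))] at hh
      exact hh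
    have hUV : ∀ k, (1 : ℂ) = U k k * V k k := by
      intro k
      have h1 := congrFun (congrFun (hdiagEq k) k) k
      rw [mulStdMul] at h1
      simpa [Matrix.single] using h1
    have hU0 : ∀ i k, i ≠ k → U i k = 0 := by
      intro i k hik
      have h1 := congrFun (congrFun (hdiagEq k) i) k
      rw [mulStdMul] at h1
      have h2 : (0 : ℂ) = U i k * V k k := by
        simpa [Matrix.single, (Ne.symm hik : k ≠ i)] using h1
      rcases mul_eq_zero.mp h2.symm with h3 | h3
      · exact h3
      · exfalso; have := hUV k; rw [h3, mul_zero] at this; exact one_ne_zero this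
    have hV0 : ∀ k j, j ≠ k → V k j = 0 := by
      intro k j hjk
      have h1 := congrFun (congrFun (hdiagEq k) k) j
      rw [mulStdMul] at h1
      have h2 : (0 : ℂ) = U k k * V k j := by
        simpa [Matrix.single, (Ne.symm hjk : k ≠ j)] using h1
      rcases mul_eq_zero.mp h2.symm with h3 | h3
      · exfalso; have := hUV k; rw [h3, zero_mul] at this; exact one_ne_zero this
      · exact h3
    rcases hf with rfl | rfl
    · -- f = id : contradiction
      obtain ⟨c, d, hcd⟩ : ∃ c d : Fin n,
          g (Matrix.single q0 q1 1) = Matrix.single c d 1 := by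
        rcases hg with rfl | rfl
        · exact ⟨q0, q1, rfl⟩
        · exact ⟨q1, q0, stdTranspose _ _⟩
      have heq := h (Matrix.single p0 p1 1) (Matrix.single q0 q1 1)
      rw [reindexKronStd, ez, ew, id_eq, hcd, reindexKronStd, swapMap_std_ab _ _ hzw] at heq
      have h1 := congrFun (congrFun heq w) z
      rw [mulStdMul] at h1
      have hne : w ≠ finProdFinEquiv (p0, c) := by
        simp only [ne_eq, Fin.ext_iff, finProdFinEquiv_apply_val, hwval, hp0]
        have : (c : ℕ) < n := c.2
        omega
      rw [hU0 w _ hne, zero_mul] at h1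
      simp [Matrix.single] at h1
    · rcases hg with rfl | rfl
      · -- f = transpose, g = id : contradiction
        have heq := h (Matrix.single p0 p1 1) (Matrix.single q0 q1 1)
        rw [reindexKronStd, ez, ew, stdTranspose, id_eq, reindexKronStd,
          swapMap_std_ab _ _ hzw] at heq
        have h1 := congrFun (congrFun heq w) z
        rw [mulStdMul] at h1
        have hne : w ≠ finProdFinEquiv (p1, q0) := by
          simp only [ne_eq, Fin.ext_iff, finProdFinEquiv_apply_val, hwval, hp1, hq0]
          omega
        rw [hU0 w _ hne, zero_mul] at h1
        simp [Matrix.single] at h1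
      · -- f = transpose, g = transpose : contradiction via off-corner entry
        have heq := h (Matrix.single p0 p1 1) (Matrix.single q0 q0 1)
        rw [reindexKronStd, ez, stdTranspose, stdTranspose, reindexKronStd, ez] at heq
        set t : Fin (m * n) := finProdFinEquiv (p1, q0) with ht
        have htval : (t : ℕ) = n * (m - 1) := by
          rw [ht]; simp only [finProdFinEquiv_apply_val, hp1, hq0]; omega
        have hzt : z ≠ t := by
          simp only [ne_eq, Fin.ext_iff, hzval, htval]; omega
        have htw : t ≠ w := by
          simp only [ne_eq, Fin.ext_iff, hwval, htval]; omega
        rw [swapMap_std _ _ _ _ (fun ⟨h1, h2⟩ => htw h2)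
          (fun ⟨h1, h2⟩ => hzw h1)] at heq
        have h1 := congrFun (congrFun heq z) t
        rw [mulStdMul, hU0 z t hzt, zero_mul] at h1
        simp [Matrix.single] at h1
end
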